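/- Let $H_m$ be the subgroup of the integer Heisenberg group consisting of upper unitriangular $3 \times 3$ integer matrices $A$ with $m \mid A_{12}$, for a positive integer $m$. Then the abelianization of $H_m$ is isomorphic to $\mathbb{Z} \times \mathbb{Z} \times \mathbb{Z}/m\mathbb{Z}$. -/

import Mathlib

open Matrix

/-- A `3 × 3` matrix is upper unitriangular if it has `1`s on the diagonal
and `0`s below the diagonal. -/
def IsUnitri {R : Type*} [CommRing R] (A : Matrix (Fin 3) (Fin 3) R) : Prop :=
  A 0 0 = 1 ∧ A 1 1 = 1 ∧ A 2 2 = 1 ∧ A 1 0 = 0 ∧ A 2 0 = 0 ∧ A 2 1 = 0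

/-- The Heisenberg group over `R`: upper unitriangular `3 × 3` matrices. -/
def Heisenberg (R : Type*) [CommRing R] : Type _ :=
  {A : Matrix (Fin 3) (Fin 3) R // IsUnitri A}

namespace Heisenberg

variable {R : Type*} [CommRing R]

theorem isUnitri_mul {A B : Matrix (Fin 3) (Fin 3) R} (hA : IsUnitri A)
    (hB : IsUnitri B) : IsUnitri (A * B) := by
  obtain ⟨a1, a2, a3, a4, a5, a6⟩ := hA
  obtain ⟨b1, b2, b3, b4, b5, b6⟩ := hB
  refine ⟨?_, ?_, ?_, ?_, ?_, ?_⟩ <;>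
    simp [Matrix.mul_apply, Fin.sum_univ_three, a1, a2, a3, a4, a5, a6,
      b1, b2, b3, b4, b5, b6]

instance : Group (Heisenberg R) where
  mul A B := ⟨A.1 * B.1, isUnitri_mul A.2 B.2⟩
  one := ⟨1, by refine ⟨?_, ?_, ?_, ?_, ?_, ?_⟩ <;> simp [Matrix.one_apply]⟩
  inv A := ⟨!![1, -(A.1 0 1), A.1 0 1 * A.1 1 2 - A.1 0 2;
               0, 1, -(A.1 1 2);
               0, 0, 1], by
    refine ⟨?_, ?_, ?_, ?_, ?_, ?_⟩ <;> simp [Matrix.vecHead, Matrix.vecTail]⟩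
  mul_assoc A B C := Subtype.ext (mul_assoc A.1 B.1 C.1)
  one_mul A := Subtype.ext (one_mul A.1)
  mul_one A := Subtype.ext (mul_one A.1)
  inv_mul_cancel A := by
    obtain ⟨a1, a2, a3, a4, a5, a6⟩ := A.2
    apply Subtype.ext
    show _ * A.1 = (1 : Matrix (Fin 3) (Fin 3) R)
    ext i j
    fin_cases i <;> fin_cases j <;>
      simp [Matrix.mul_apply, Fin.sum_univ_three, Matrix.one_apply,
        a1, a2, a3, a4, a5, a6] <;> ring

@[simp] theorem mul_val (A B : Heisenberg R) : (A * B).1 = A.1 * B.1 := rfl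

@[simp] theorem one_val : ((1 : Heisenberg R)).1 = (1 : Matrix (Fin 3) (Fin 3) R) := rfl

@[simp] theorem inv_val (A : Heisenberg R) :
    (A⁻¹).1 = !![1, -(A.1 0 1), A.1 0 1 * A.1 1 2 - A.1 0 2;
                 0, 1, -(A.1 1 2);
                 0, 0, 1] := rfl

theorem mul_apply_01 (A B : Heisenberg R) :
    (A * B).1 0 1 = A.1 0 1 + B.1 0 1 := by
  obtain ⟨a1, a2, a3, a4, a5, a6⟩ := A.2
  obtain ⟨b1, b2, b3, b4, b5, b6⟩ := B.2
  simp [Matrix.mul_apply, Fin.sum_univ_three, a1, a2, a3, a4, a5, a6,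
    b1, b2, b3, b4, b5, b6]
  ring

end Heisenberg


/-- The subgroup `H_m` of the integer Heisenberg group consisting of matrices
whose `(1,2)`-entry is divisible by `m`. -/
def Hsub (m : ℕ) : Subgroup (Heisenberg ℤ) where
  carrier := {A | (m : ℤ) ∣ A.1 0 1}
  mul_mem' := by
    intro A B hA hB
    simpa [Heisenberg.mul_apply_01] using dvd_add hA hB
  one_mem' := by simp [Matrix.one_apply]
  inv_mem' := by
    intro A hA
    simpa using hA.neg_right

instance Hsub_normal (m : ℕ) : (Hsub m).Normal := by
  constructor
  intro A hA g
  have : (g * A * g⁻¹).1 0 1 = A.1 0 1 := by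
    rw [Heisenberg.mul_apply_01, Heisenberg.mul_apply_01]
    simp
  show (m : ℤ) ∣ _
  rw [this]
  exact hA

/-!
The map `A ↦ (A₁₂ / m, A₂₃, A₁₃ mod m)` is a homomorphism on `H_m`: the only non-additive
entry is `(AB)₁₃ = A₁₃ + B₁₃ + A₁₂ B₂₃`, and the correction term vanishes mod `m`. It is onto
an abelian group, so it factors through the abelianization, and its kernel consists of the
central matrices with `m ∣ A₁₃`. Each of these is a commutator: the commutator of the matrices
with single off-diagonal entries `a` at `(1,2)` and `c` at `(2,3)` has `(1,3)`-entry `a c`,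
so `a = m` produces every multiple of `m`.
-/

open scoped commutatorElement

namespace Heisenberg

variable {R : Type*} [CommRing R]

theorem mul_apply_12 (A B : Heisenberg R) : (A * B).1 1 2 = A.1 1 2 + B.1 1 2 := by
  obtain ⟨-, ha11, -, ha10, -, -⟩ := A.2
  obtain ⟨-, -, hb22, -, -, -⟩ := B.2
  simp [Matrix.mul_apply, Fin.sum_univ_three, ha11, ha10, hb22]
  ring

theorem mul_apply_02 (A B : Heisenberg R) :
    (A * B).1 0 2 = A.1 0 2 + B.1 0 2 + A.1 0 1 * B.1 1 2 := by
  obtain ⟨ha00, -, -, -, -, -⟩ := A.2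
  obtain ⟨-, -, hb22, -, -, -⟩ := B.2
  simp [Matrix.mul_apply, Fin.sum_univ_three, ha00, hb22]
  ring

theorem ext {A B : Heisenberg R} (h01 : A.1 0 1 = B.1 0 1) (h02 : A.1 0 2 = B.1 0 2)
    (h12 : A.1 1 2 = B.1 1 2) : A = B := by
  obtain ⟨ha00, ha11, ha22, ha10, ha20, ha21⟩ := A.2
  obtain ⟨hb00, hb11, hb22, hb10, hb20, hb21⟩ := B.2
  apply Subtype.ext
  ext i j
  fin_cases i <;> fin_cases j <;> simp_all

/-- The matrix `[[1, a, b], [0, 1, c], [0, 0, 1]]`. -/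
def mk (a b c : R) : Heisenberg R :=
  ⟨!![1, a, b; 0, 1, c; 0, 0, 1], by refine ⟨?_, ?_, ?_, ?_, ?_, ?_⟩ <;> simp⟩

@[simp] theorem mk_apply_01 (a b c : R) : (mk a b c).1 0 1 = a := rfl

@[simp] theorem mk_apply_02 (a b c : R) : (mk a b c).1 0 2 = b := rfl

@[simp] theorem mk_apply_12 (a b c : R) : (mk a b c).1 1 2 = c := rfl

theorem commutatorElement_mk (a c : R) : ⁅mk a 0 0, mk 0 0 c⁆ = mk 0 (a * c) 0 := by
  apply ext <;>
    simp [commutatorElement_def, mul_apply_01, mul_apply_02, mul_apply_12]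

end Heisenberg

open Heisenberg

def Hsub.toAbelian (m : ℕ) : Hsub m →* Multiplicative (ℤ × ℤ × ZMod m) where
  toFun A := .ofAdd (A.1.1 0 1 / m, A.1.1 1 2, (A.1.1 0 2 : ZMod m))
  map_one' := by simp
  map_mul' A B := by
    have hA : (A.1.1 0 1 : ZMod m) = 0 := (ZMod.intCast_zmod_eq_zero_iff_dvd _ _).2 A.2
    simp only [Subgroup.coe_mul, mul_apply_01, mul_apply_02, mul_apply_12,
      Int.add_ediv_of_dvd_left A.2, Int.cast_add, Int.cast_mul, hA, zero_mul, add_zero]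
    rfl

theorem Hsub.toAbelian_surjective {m : ℕ} (hm : 0 < m) :
    Function.Surjective (Hsub.toAbelian m) := by
  rintro ⟨a, c, b⟩
  refine ⟨⟨mk (m * a) b.cast c, dvd_mul_right _ _⟩, ?_⟩
  show Multiplicative.ofAdd _ = Multiplicative.ofAdd (a, c, b)
  simp [Int.mul_ediv_cancel_left _ (Int.natCast_ne_zero.2 hm.ne')]

theorem Hsub.ker_toAbelian {m : ℕ} : (Hsub.toAbelian m).ker = commutator (Hsub m) := by
  refine le_antisymm (fun A hA => ?_) (Abelianization.commutator_subset_ker _)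
  obtain ⟨⟨A, hA_unitri⟩, hA_mem⟩ := A
  obtain ⟨h01, h12, h02⟩ : A 0 1 / m = 0 ∧ A 1 2 = 0 ∧ (A 0 2 : ZMod m) = 0 := by
    simpa [Hsub.toAbelian, Prod.ext_iff] using hA
  have h01' : A 0 1 = 0 := by
    rw [← Int.mul_ediv_cancel' (show (m : ℤ) ∣ A 0 1 from hA_mem), h01, mul_zero]
  obtain ⟨t, ht⟩ := (ZMod.intCast_zmod_eq_zero_iff_dvd _ _).1 h02
  have : (⟨⟨A, hA_unitri⟩, hA_mem⟩ : Hsub m) =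
      ⁅(⟨mk m 0 0, dvd_refl _⟩ : Hsub m), ⟨mk 0 0 t, dvd_zero _⟩⁆ := by
    apply Subtype.ext
    show _ = ⁅mk (m : ℤ) 0 0, mk 0 0 t⁆
    rw [commutatorElement_mk]
    apply Heisenberg.ext <;> simp [h01', ht, h12]
  rw [this]
  exact Subgroup.commutator_mem_commutator (Subgroup.mem_top _) (Subgroup.mem_top _)

/-- The abelianization of `H_m` is isomorphic to `ℤ × ℤ × ℤ/mℤ`. -/
theorem stmt_7 (m : ℕ) (hm : 0 < m) :
    Nonempty (Abelianization ↥(Hsub m) ≃* Multiplicative (ℤ × ℤ × ZMod m)) :=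
  ⟨(QuotientGroup.quotientMulEquivOfEq Hsub.ker_toAbelian).symm.trans
    (QuotientGroup.quotientKerEquivOfSurjective _ (Hsub.toAbelian_surjective hm))⟩
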